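/- Let f(z) = a·z with a ∈ ℝ, g(z) = e^z, and μ = Re(f) = a·u₁ where z = u₁ + iu₂. Let ℓ : ℝ → ℝ be differentiable and let T = 1 + e^{2u₁}. Then the map X(z) = (ℓ'(μ)/(2|g'(z)|²))·(T·g'(z)·conj(f'(z)) − 2g(z)⟨g'(z), g(z)f'(z)⟩, −2⟨g'(z), g(z)f'(z)⟩) + ℓ(μ)·(2g(z), 2 − T)/T equals (M(u₁)cos(u₂), M(u₁)sin(u₂), N(u₁)) where M(u₁) = [a·ℓ'(a u₁)(e^{−u₁} − e^{3u₁}) + 4ℓ(a u₁)e^{u₁}]/(2(1 + e^{2u₁})) and N(u₁) = [ℓ(a u₁)(1 − e^{2u₁}) − a·ℓ'(a u₁)(1 + e^{2u₁})]/(1 + e^{2u₁}) (taking z₀ = 0, so b = 0); in particular X is a surface of revolution about the third coordinate axis. -/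

import Mathlib

open Complex

/-- Real inner product on ℂ: ⟨w,v⟩ = Re(w)Re(v) + Im(w)Im(v). -/
def rip (w v : ℂ) : ℝ := w.re * v.re + w.im * v.im

/-- Identify (w, t) ∈ ℂ × ℝ with (Re w, Im w, t) ∈ ℝ³. -/
def toR3 (w : ℂ) (t : ℝ) : ℝ × ℝ × ℝ := (w.re, w.im, t)

theorem stmt_11 (a : ℝ) (ℓ ℓ' : ℝ → ℝ)
    (hℓ : ∀ t, HasDerivAt ℓ (ℓ' t) t)
    (f g : ℂ → ℂ) (hf : ∀ z, f z = (a : ℂ) * z) (hg : ∀ z, g z = Complex.exp z)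
    (μ : ℂ → ℝ) (hμ : ∀ z, μ z = a * z.re)
    (T : ℂ → ℝ) (hT : ∀ z, T z = 1 + Real.exp (2 * z.re))
    (X : ℂ → ℝ × ℝ × ℝ)
    (hX : ∀ z, X z =
      toR3
        ((ℓ' (μ z) / (2 * ‖Complex.exp z‖ ^ 2)) *
            ((T z : ℂ) * Complex.exp z * (starRingEnd ℂ (a : ℂ)) -
              2 * Complex.exp z * (rip (Complex.exp z) (Complex.exp z * (a : ℂ)) : ℂ)) +
          (ℓ (μ z) : ℂ) * (2 * Complex.exp z) / (T z : ℂ))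
        ((ℓ' (μ z) / (2 * ‖Complex.exp z‖ ^ 2)) *
            (-2 * rip (Complex.exp z) (Complex.exp z * (a : ℂ))) +
          ℓ (μ z) * (2 - T z) / T z))
    (M N : ℝ → ℝ)
    (hM : ∀ u₁, M u₁ =
      (a * ℓ' (a * u₁) * (Real.exp (-u₁) - Real.exp (3 * u₁)) +
        4 * ℓ (a * u₁) * Real.exp u₁) / (2 * (1 + Real.exp (2 * u₁))))
    (hN : ∀ u₁, N u₁ =
      (ℓ (a * u₁) * (1 - Real.exp (2 * u₁)) -
        a * ℓ' (a * u₁) * (1 + Real.exp (2 * u₁))) / (1 + Real.exp (2 * u₁))) :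
    ∀ z : ℂ, X z =
      (M z.re * Real.cos z.im, M z.re * Real.sin z.im, N z.re) := by
  intro z
  have hexp : ‖Complex.exp z‖ = Real.exp z.re := Complex.norm_exp z
  have hpos : (0:ℝ) < Real.exp z.re := Real.exp_pos _
  have hpos2 : (0:ℝ) < 1 + Real.exp (2 * z.re) := by positivity
  have h2 : Real.exp (2 * z.re) = Real.exp z.re * Real.exp z.re := by
    rw [two_mul, Real.exp_add]
  have h3 : Real.exp (3 * z.re) = Real.exp z.re * Real.exp z.re * Real.exp z.re := by
    rw [show (3:ℝ) * z.re = z.re + z.re + z.re by ring, Real.exp_add, Real.exp_add]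
  have hrip : rip (Complex.exp z) (Complex.exp z * (a:ℂ)) = a * Real.exp (2 * z.re) := by
    simp only [rip, Complex.mul_re, Complex.mul_im, Complex.exp_re, Complex.exp_im,
      Complex.ofReal_re, Complex.ofReal_im, h2]
    linear_combination (Real.exp z.re * Real.exp z.re * a) * (Real.sin_sq_add_cos_sq z.im)
  have hns : Complex.normSq (Complex.exp (z.re : ℂ)) = Real.exp z.re * Real.exp z.re := by
    rw [Complex.normSq_eq_norm_sq, Complex.norm_exp, Complex.ofReal_re, sq]
  rw [hX, hM, hN, hT, hμ, hexp, hrip]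
  simp only [toR3, rip, Prod.mk.injEq, ← Complex.ofReal_pow]
  refine ⟨?_, ?_, ?_⟩ <;>
  · simp only [Complex.add_re, Complex.add_im, Complex.mul_re, Complex.mul_im,
      Complex.div_re, Complex.div_im, Complex.sub_re, Complex.sub_im,
      Complex.ofReal_re, Complex.ofReal_im, Complex.exp_re, Complex.exp_im,
      Complex.conj_ofReal, Complex.normSq_ofReal, Real.exp_neg, hns, h2, h3,
      Complex.re_ofNat, Complex.im_ofNat, Complex.normSq_mul, Complex.normSq_ofNat]
    field_simp
    try simp only [hns]
    ring
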